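/- arXiv:2308.15629 — 4 statements merged into one kernel-verified Lean document; each statement's English description precedes it below -/
import Mathlib

section
/- Fix t ≥ 0, π ∈ (0,1) and λ > 0 with π = λ/(1+λ) (so 1-π = 1/(1+λ)). For 0 ≤ s₁ ≤ t and s₂ ≥ s₁ define F_λ(s₁,s₂) = [π(1 - e^{-s₂}) + (1-π)(1 - e^{-λ s₁} - (λ/(λ-1))(e^{-s₂} - e^{-λ s₁} e^{s₁-s₂}))] / [π + (1-π)(1 - e^{-λ t})]. Then as λ → 0⁺, F_λ(s₁,s₂) → (1 - e^{s₁-s₂} + s₁)/(1+t). -/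
/-!
Numerator and denominator of `F_λ` both vanish at `λ = 0` and are differentiable there, with
derivatives `1 - e^{s₁-s₂} + s₁` and `1 + t`. Dividing both by `λ`, `F_λ` is a ratio of difference
quotients, so it tends to the ratio of these derivatives.
-/

open Real Filter Topology

theorem HasDerivAt.tendsto_div_of_apply_eq_zero {f g : ℝ → ℝ} {f' g' a : ℝ}
    (hf : HasDerivAt f f' a) (hg : HasDerivAt g g' a) (hfa : f a = 0) (hga : g a = 0)
    (hg' : g' ≠ 0) : Tendsto (fun x => f x / g x) (𝓝[≠] a) (𝓝 (f' / g')) := by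
  refine ((hasDerivAt_iff_tendsto_slope.mp hf).div
    (hasDerivAt_iff_tendsto_slope.mp hg) hg').congr' ?_
  filter_upwards [self_mem_nhdsWithin] with x hx
  rw [Pi.div_apply, slope_def_field, slope_def_field, hfa, hga, sub_zero, sub_zero]
  exact div_div_div_cancel_right₀ (sub_ne_zero.mpr hx) _ _

/- `π = λ/(1+λ)` appears as `lam / (1 + lam)` and `1 - π` as `1 / (1 + lam)`; the denominator is
the probability that the group is ON at some time in `[0, t]`. -/
namespace MarksCdf

noncomputable def numerator (s₁ s₂ lam : ℝ) : ℝ :=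
  (lam / (1 + lam)) * (1 - exp (-s₂)) +
    (1 / (1 + lam)) * (1 - exp (-(lam * s₁)) -
      (lam / (lam - 1)) * (exp (-s₂) - exp (-(lam * s₁)) * exp (s₁ - s₂)))

noncomputable def denominator (t lam : ℝ) : ℝ :=
  (lam / (1 + lam)) + (1 / (1 + lam)) * (1 - exp (-(lam * t)))

lemma hasDerivAt_one_div_one_add : HasDerivAt (fun lam : ℝ => 1 / (1 + lam)) (-1) 0 := by
  simpa using ((hasDerivAt_id' (0 : ℝ)).const_add 1).fun_inv (by norm_num)

lemma hasDerivAt_exp_neg_mul (s : ℝ) : HasDerivAt (fun lam : ℝ => exp (-(lam * s))) (-s) 0 := by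
  simpa using (hasDerivAt_mul_const (x := 0) s).neg.exp

lemma hasDerivAt_numerator (s₁ s₂ : ℝ) :
    HasDerivAt (numerator s₁ s₂) (1 - exp (s₁ - s₂) + s₁) 0 := by
  have hid : HasDerivAt (fun lam : ℝ => lam) 1 0 := hasDerivAt_id' 0
  have hexp : HasDerivAt (fun lam : ℝ => exp (-(lam * s₁))) (-s₁) 0 :=
    hasDerivAt_exp_neg_mul s₁
  refine HasDerivAt.congr_deriv
    (((hid.fun_div (hid.const_add 1) (by norm_num)).mul_const (1 - exp (-s₂))).fun_add
      (hasDerivAt_one_div_one_add.fun_mul ((hexp.const_sub 1).fun_sub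
        ((hid.fun_div (hid.sub_const 1) (by norm_num)).fun_mul
          ((hexp.mul_const (exp (s₁ - s₂))).const_sub (exp (-s₂))))))) ?_
  simp [exp_sub]
  ring

lemma hasDerivAt_denominator (t : ℝ) : HasDerivAt (denominator t) (1 + t) 0 := by
  have hid : HasDerivAt (fun lam : ℝ => lam) 1 0 := hasDerivAt_id' 0
  refine HasDerivAt.congr_deriv ((hid.fun_div (hid.const_add 1) (by norm_num)).fun_add
    (hasDerivAt_one_div_one_add.fun_mul ((hasDerivAt_exp_neg_mul t).const_sub 1))) ?_
  simp

lemma numerator_zero (s₁ s₂ : ℝ) : numerator s₁ s₂ 0 = 0 := by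
  simp [numerator]

lemma denominator_zero (t : ℝ) : denominator t 0 = 0 := by
  simp [denominator]

end MarksCdf

theorem marks_cdf_limit_general (t s₁ s₂ : ℝ) (ht : 0 ≤ t) :
    Tendsto (fun lam : ℝ =>
        ((lam / (1 + lam)) * (1 - exp (-s₂)) +
          (1 / (1 + lam)) * (1 - exp (-(lam * s₁)) -
            (lam / (lam - 1)) * (exp (-s₂) - exp (-(lam * s₁)) * exp (s₁ - s₂)))) /
        ((lam / (1 + lam)) + (1 / (1 + lam)) * (1 - exp (-(lam * t)))))
      (nhdsWithin 0 (Set.Ioi 0)) (nhds ((1 - exp (s₁ - s₂) + s₁) / (1 + t))) :=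
  ((MarksCdf.hasDerivAt_numerator s₁ s₂).tendsto_div_of_apply_eq_zero
    (MarksCdf.hasDerivAt_denominator t) (MarksCdf.numerator_zero s₁ s₂)
    (MarksCdf.denominator_zero t) (by linarith)).mono_left (nhdsGT_le_nhdsNE 0)

/-- The conditional joint CDF of the switch-on/switch-off marks converges, as `λ → 0⁺`
(with `π = λ/(1+λ)`), to `(1 - e^{s₁-s₂} + s₁)/(1+t)`. -/
theorem marks_cdf_limit (t s₁ s₂ : ℝ) (ht : 0 ≤ t) (h0 : 0 ≤ s₁) (h1t : s₁ ≤ t)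
    (h12 : s₁ ≤ s₂) :
    Tendsto (fun lam : ℝ =>
        ((lam / (1 + lam)) * (1 - exp (-s₂)) +
          (1 / (1 + lam)) * (1 - exp (-(lam * s₁)) -
            (lam / (lam - 1)) * (exp (-s₂) - exp (-(lam * s₁)) * exp (s₁ - s₂)))) /
        ((lam / (1 + lam)) + (1 / (1 + lam)) * (1 - exp (-(lam * t)))))
      (nhdsWithin 0 (Set.Ioi 0)) (nhds ((1 - exp (s₁ - s₂) + s₁) / (1 + t))) :=
  marks_cdf_limit_general t s₁ s₂ ht
end

section
/- Let w₁,...,w_n ≥ 0 with ℓ = Σᵢ wᵢ > 0, let k ≥ 2, p_k ≥ 0, and fix i ∈ [n] with weight w_i. For each (k-1)-subset {j₁,...,j_{k-1}} of [n]\{i} set π_a = k! p_k w_i w_{j₁}···w_{j_{k-1}} / (ℓ^{k-1} + k! p_k w_i w_{j₁}···w_{j_{k-1}}). Then Σ_a π_a² ≤ ((k-1)! (k p_k)² w_i² / ℓ^{k-1}) · (Σ_j w_j²)^{k-1} / ℓ^{k-1}, where the sum ranges over all (k-1)-subsets of [n]. -/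
/-!
Dropping the summand `k! p w_i ∏ w_j` from the denominator bounds each `π s` by
`k! p w_i ∏_{j ∈ s} w_j / ℓ^(k-1)`, so the sum of squares is at most `(k! p w_i / ℓ^(k-1))^2`
times the elementary symmetric sum `e_{k-1}` of the squared weights. For nonnegative `x` one has
`r! e_r(x) ≤ (∑ x)^r`, by induction on the index set: adding a point `a` to a set with sum `S`
adds `(r+1) x_a · r! e_r ≤ (r+1) x_a S^r`, the linear term of the binomial expansion of
`(S + x_a)^(r+1)`.
-/

open Finset Nat

namespace Finset

variable {α β : Type*}

lemma sum_powersetCard_succ_insert [AddCommMonoid β] [DecidableEq α] {s : Finset α} {a : α}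
    (ha : a ∉ s) (n : ℕ) (f : Finset α → β) :
    ∑ t ∈ powersetCard (n + 1) (insert a s), f t =
      ∑ t ∈ powersetCard (n + 1) s, f t + ∑ t ∈ powersetCard n s, f (insert a t) := by
  rw [powersetCard_succ_insert ha, sum_union, sum_image]
  · exact insert_erase_invOn.2.injOn.mono fun t ht ↦ notMem_mono (mem_powersetCard.1 ht).1 ha
  · aesop (add simp [disjoint_left, mem_powersetCard, insert_subset_iff])

end Finset

section OrderedSemiring

variable {R : Type*} [CommSemiring R] [PartialOrder R] [IsStrictOrderedRing R]

lemma pow_succ_add_mul_pow_mul_le_add_pow {a b : R} (ha : 0 ≤ a) (hb : 0 ≤ b) (n : ℕ) :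
    a ^ (n + 1) + (n + 1) * a ^ n * b ≤ (a + b) ^ (n + 1) := by
  induction n with
  | zero => simp
  | succ n ih =>
    push_cast
    have expand : (a ^ (n + 1) + (n + 1) * a ^ n * b) * (a + b) =
        a ^ (n + 2) + (n + 1 + 1) * a ^ (n + 1) * b + (n + 1) * a ^ n * b * b := by ring
    calc a ^ (n + 2) + (n + 1 + 1) * a ^ (n + 1) * b
        ≤ (a ^ (n + 1) + (n + 1) * a ^ n * b) * (a + b) := by
          rw [expand]
          exact le_add_of_nonneg_right (by positivity)
      _ ≤ (a + b) ^ (n + 2) := by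
          rw [pow_succ (a + b) (n + 1)]
          exact mul_le_mul_of_nonneg_right ih (add_nonneg ha hb)

variable {ι : Type*} {g : ι → R}

theorem factorial_mul_sum_powersetCard_prod_le [DecidableEq ι] (hg : ∀ j, 0 ≤ g j)
    (s : Finset ι) (r : ℕ) :
    r ! * ∑ t ∈ powersetCard r s, ∏ j ∈ t, g j ≤ (∑ j ∈ s, g j) ^ r := by
  induction s using Finset.induction_on generalizing r with
  | empty =>
    cases r with
    | zero => simp
    | succ r => simp [powersetCard_eq_empty.2 (card_empty.trans_lt r.succ_pos)]
  | insert a s ha ih =>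
    cases r with
    | zero => simp
    | succ r =>
    have hS : 0 ≤ ∑ j ∈ s, g j := sum_nonneg fun j _ ↦ hg j
    have sum_prod_insert : ∑ t ∈ powersetCard r s, ∏ j ∈ insert a t, g j =
        g a * ∑ t ∈ powersetCard r s, ∏ j ∈ t, g j := by
      rw [mul_sum]
      exact sum_congr rfl fun t ht ↦ prod_insert (notMem_mono (mem_powersetCard.1 ht).1 ha)
    rw [sum_powersetCard_succ_insert ha, sum_prod_insert, sum_insert ha]
    calc ((r + 1)! : R) * (∑ t ∈ powersetCard (r + 1) s, ∏ j ∈ t, g j +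
          g a * ∑ t ∈ powersetCard r s, ∏ j ∈ t, g j)
        = (r + 1)! * ∑ t ∈ powersetCard (r + 1) s, ∏ j ∈ t, g j +
          (r + 1) * (r ! * ∑ t ∈ powersetCard r s, ∏ j ∈ t, g j) * g a := by
          rw [factorial_succ]; push_cast; ring
      _ ≤ (∑ j ∈ s, g j) ^ (r + 1) + (r + 1) * (∑ j ∈ s, g j) ^ r * g a := by
          gcongr
          · exact ih _
          · exact hg a
          · exact ih _
      _ ≤ (g a + ∑ j ∈ s, g j) ^ (r + 1) := by
          rw [add_comm (g a)]
          exact pow_succ_add_mul_pow_mul_le_add_pow hS (hg a) r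

end OrderedSemiring

/-- Bound on the sum of squared group-activity probabilities for groups of size `k`
containing a fixed vertex `i`. -/
theorem pi_squared_bound (n : ℕ) (w : Fin n → ℝ) (hw : ∀ j, 0 ≤ w j)
    (hl : 0 < ∑ j, w j) (k : ℕ) (hk : 2 ≤ k) (p : ℝ) (hp : 0 ≤ p) (i : Fin n) :
    let ℓ : ℝ := ∑ j, w j
    let π : Finset (Fin n) → ℝ := fun s =>
      (Nat.factorial k * p * w i * ∏ j ∈ s, w j) /
        (ℓ ^ (k - 1) + Nat.factorial k * p * w i * ∏ j ∈ s, w j)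
    ∑ s ∈ Finset.powersetCard (k - 1) (Finset.univ : Finset (Fin n)), (π s) ^ 2 ≤
      (Nat.factorial (k - 1) * (k * p) ^ 2 * (w i) ^ 2 / ℓ ^ (k - 1)) *
        ((∑ j, w j ^ 2) ^ (k - 1) / ℓ ^ (k - 1)) := by
  intro ℓ π
  obtain ⟨r, rfl⟩ : ∃ r, k = r + 1 := ⟨k - 1, by omega⟩
  simp only [Nat.add_sub_cancel]
  have hℓ : 0 < ℓ ^ r := pow_pos hl r
  set c : ℝ := (r + 1)! * p * w i
  have π_sq_le (s : Finset (Fin n)) : π s ^ 2 ≤ (c / ℓ ^ r) ^ 2 * ∏ j ∈ s, w j ^ 2 := by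
    have hnum : 0 ≤ c * ∏ j ∈ s, w j :=
      mul_nonneg (by positivity [hw i]) (prod_nonneg fun j _ ↦ hw j)
    have hπ : π s ≤ (c * ∏ j ∈ s, w j) / ℓ ^ r :=
      div_le_div_of_nonneg_left hnum hℓ (le_add_of_nonneg_right hnum)
    calc π s ^ 2 ≤ ((c * ∏ j ∈ s, w j) / ℓ ^ r) ^ 2 := by gcongr
      _ = (c / ℓ ^ r) ^ 2 * ∏ j ∈ s, w j ^ 2 := by rw [prod_pow]; ring
  have esymm_sq_le := factorial_mul_sum_powersetCard_prod_le (fun j ↦ sq_nonneg (w j)) univ r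
  calc ∑ s ∈ powersetCard r univ, π s ^ 2
      ≤ (c / ℓ ^ r) ^ 2 * ∑ s ∈ powersetCard r univ, ∏ j ∈ s, w j ^ 2 := by
        rw [mul_sum]; exact sum_le_sum fun s _ ↦ π_sq_le s
    _ ≤ (c / ℓ ^ r) ^ 2 * ((∑ j, w j ^ 2) ^ r / r !) := by
        gcongr
        rw [le_div_iff₀ (by positivity), mul_comm]
        exact esymm_sq_le
    _ = _ := by
        simp only [c, factorial_succ]; push_cast; field_simp
end

section
/- For the bipartite generalized random graph with independent group indicators X_a, a ranging over subsets of [n] of size ≥ 2, where P(X_a = 1) = f(|a|)∏_{i∈a} w_i / (ℓ^{|a|-1} + f(|a|)∏_{i∈a} w_i) with ℓ = Σᵢ wᵢ, the probability of any outcome x factorizes as P(X = x) = (∏_a (1 + λ_a))⁻¹ · ∏_{i∈[n]} w_i^{d_i^(l)(x)} · ∏_a (f(d_a^(r)(x)) / ℓ^{d_a^(r)(x)(1 - 1/|a|)}), where λ_a = f(|a|)∏_{i∈a} w_i/ℓ^{|a|-1}, d_i^(l)(x) = Σ_{a∋i} x_a, d_a^(r)(x) = |a|·x_a, and f(0) =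 1. In particular, P(X = x) depends on x only through the degree sequences (d^(l)(x), d^(r)(x)). -/
/-!
Group `a` is a Bernoulli variable with odds `λ_a = f(|a|) ∏_{i ∈ a} w_i / ℓ^{|a|-1}`, so
`P(X_a = x_a) = (1 + λ_a)⁻¹ λ_a^{x_a}`. Since `|a| - 1 = d_a^(r)(1 - 1/|a|)` when `x_a = 1`, and
`f(0) = 1`, the factor `λ_a^{x_a}` splits as `(∏_{i ∈ a} w_i)^{x_a} · f(d_a^(r)) / ℓ^{d_a^(r)(1 - 1/|a|)}`;
regrouping the weights `∏_a (∏_{i ∈ a} w_i)^{x_a}` by vertex gives `∏_i w_i^{d_i^(l)}`.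
-/

open Finset

theorem prod_pow_card_filter_mem_eq_prod_ite {ι κ M : Type*} [Fintype ι] [DecidableEq ι]
    [Fintype κ] [CommMonoid M] (s : κ → Finset ι) (p : κ → Prop) [DecidablePred p] (w : ι → M) :
    ∏ i, w i ^ #{a | i ∈ s a ∧ p a} = ∏ a, if p a then ∏ i ∈ s a, w i else 1 := by
  calc ∏ i, w i ^ #{a | i ∈ s a ∧ p a}
      = ∏ i, ∏ _a ∈ {a | i ∈ s a ∧ p a}, w i := by simp only [prod_const]
    _ = ∏ a, ∏ i ∈ if p a then s a else ∅, w i :=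
        (prod_comm' fun a i => by by_cases h : p a <;> simp [h]).symm
    _ = ∏ a, if p a then ∏ i ∈ s a, w i else 1 := by
        refine prod_congr rfl fun a _ => ?_
        split_ifs <;> simp

theorem ite_div_one_add_eq_inv_one_add_mul {K : Type*} [Field K] {t : K} (h : 1 + t ≠ 0)
    (b : Bool) :
    (if b then t / (1 + t) else 1 - t / (1 + t)) = (1 + t)⁻¹ * (if b then t else 1) := by
  cases b
  · simp only [Bool.false_eq_true, if_false]
    field_simp
    ring
  · simp only [if_true]
    field_simp

theorem div_add_eq_div_div_one_add_div {K : Type*} [Field K] {L q : K} (hL : L ≠ 0) :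
    q / (L + q) = q / L / (1 + q / L) := by
  rw [div_div, mul_one_add, mul_div_cancel₀ q hL]

theorem natCast_mul_one_sub_one_div {K : Type*} [Field K] [CharZero K] {k : ℕ} (hk : 1 ≤ k) :
    (k : K) * (1 - 1 / k) = ((k - 1 : ℕ) : K) := by
  have : (k : K) ≠ 0 := Nat.cast_ne_zero.mpr (by omega)
  push_cast [hk]
  field_simp

/-- Factorization of the law of the bipartite generalized random graph through its
left- and right-degree sequences. -/
theorem bgrg_factorization (n : ℕ) (w : Fin n → ℝ) (hw : ∀ i, 0 < w i)
    (f : ℕ → ℝ) (hfpos : ∀ k, 0 < f k) (hf0 : f 0 = 1)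
    (x : {a : Finset (Fin n) // 2 ≤ a.card} → Bool) :
    let ℓ : ℝ := ∑ i, w i
    let lam : {a : Finset (Fin n) // 2 ≤ a.card} → ℝ := fun a =>
      f a.1.card * (∏ i ∈ a.1, w i) / ℓ ^ (a.1.card - 1)
    let π : {a : Finset (Fin n) // 2 ≤ a.card} → ℝ := fun a =>
      f a.1.card * (∏ i ∈ a.1, w i) /
        (ℓ ^ (a.1.card - 1) + f a.1.card * (∏ i ∈ a.1, w i))
    let dl : Fin n → ℕ := fun i => (Finset.univ.filter
      (fun a : {a : Finset (Fin n) // 2 ≤ a.card} => i ∈ a.1 ∧ x a = true)).card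
    let dr : {a : Finset (Fin n) // 2 ≤ a.card} → ℕ := fun a => if x a then a.1.card else 0
    (∏ a, (if x a then π a else 1 - π a)) =
      (∏ a, (1 + lam a))⁻¹ * (∏ i, w i ^ dl i) *
        ∏ a, (f (dr a) / ℓ ^ ((dr a : ℝ) * (1 - 1 / (a.1.card : ℝ)))) := by
  intro ℓ lam π dl dr
  rw [prod_pow_card_filter_mem_eq_prod_ite (fun a => a.1) (fun a => x a = true),
    ← prod_inv_distrib, ← prod_mul_distrib, ← prod_mul_distrib]
  refine prod_congr rfl fun a _ => ?_
  have hk : 1 ≤ a.1.card := one_le_two.trans a.2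
  have hℓ : 0 < ℓ := by
    obtain ⟨i, -⟩ := card_pos.mp hk
    exact sum_pos (fun j _ => hw j) ⟨i, mem_univ i⟩
  have hlam : 0 < lam a :=
    div_pos (mul_pos (hfpos _) (prod_pos fun i _ => hw i)) (pow_pos hℓ _)
  have hπ : π a = lam a / (1 + lam a) := div_add_eq_div_div_one_add_div (by positivity)
  rw [hπ, ite_div_one_add_eq_inv_one_add_mul (by positivity), mul_assoc]
  congr 1
  cases hx : x a
  · simp [dr, hx, hf0]
  · simp only [dr, hx, if_true, natCast_mul_one_sub_one_div hk, Real.rpow_natCast, lam]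
    ring
end

section
/- Let (p_a)_{a∈A} and (q_a)_{a∈A} be success probabilities of two finite families of independent Bernoulli random variables indexed by the same set A, with max_a q_a ≤ 1 - ε̂ for some ε̂ > 0. Then the total variation distance between the product laws ⊗_a Ber(p_a) and ⊗_a Ber(q_a) is bounded by C(ε̂) · (Σ_{a∈A} (p_a - q_a)²/q_a)^{1/2} for a constant C(ε̂) depending only on ε̂; in particular, if Σ_a (p_a - q_a)²/q_a → 0 along a sequence of index sets, then |P_n(E_n) - Q_n(E_n)| → 0 uniformly over events E_n. -/
/-!
Squared total variation is bounded by the squared Hellinger distance (Cauchy–Schwarz after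
factoring `f - g = (√f - √g)(√f + √g)`). The Bhattacharyya coefficient `∑ √f √g` is
multiplicative over product measures, and `1 - ∏ ρₐ ≤ ∑ (1 - ρₐ)`, so the squared Hellinger
distance of the products is at most the sum of the coordinatewise ones. Each of those is at most
the χ²-divergence `(pₐ - qₐ)² / (qₐ (1 - qₐ)) ≤ ε̂⁻¹ (pₐ - qₐ)² / qₐ`, giving `C(ε̂) = ε̂^{-1/2}`.
-/

open Finset Real

theorem sqrt_sub_sqrt_sq_le {x y : ℝ} (hx : 0 ≤ x) (hy : 0 < y) :
    (√x - √y) ^ 2 ≤ (x - y) ^ 2 / y := by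
  rw [le_div_iff₀ hy]
  have hxy : x - y = (√x - √y) * (√x + √y) := by
    linear_combination sq_sqrt hy.le - sq_sqrt hx
  have hy_le : y ≤ (√x + √y) ^ 2 := by
    nlinarith [sq_sqrt hy.le, sqrt_nonneg x, sqrt_nonneg y]
  calc (√x - √y) ^ 2 * y ≤ (√x - √y) ^ 2 * (√x + √y) ^ 2 := by gcongr
    _ = (x - y) ^ 2 := by rw [hxy]; ring

section FiniteSums

variable {ι : Type*} (s : Finset ι) {f g : ι → ℝ}

theorem sq_sum_abs_sub_le_mul_sum_sqrt_sub_sqrt_sq (hf : ∀ i ∈ s, 0 ≤ f i)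
    (hg : ∀ i ∈ s, 0 ≤ g i) :
    (∑ i ∈ s, |f i - g i|) ^ 2 ≤
      2 * (∑ i ∈ s, (f i + g i)) * ∑ i ∈ s, (√(f i) - √(g i)) ^ 2 := by
  have hfactor : ∀ i ∈ s, |f i - g i| = |√(f i) - √(g i)| * (√(f i) + √(g i)) := fun i hi => by
    rw [← abs_of_nonneg (by positivity : 0 ≤ √(f i) + √(g i)), ← abs_mul]
    congr 1
    linear_combination sq_sqrt (hg i hi) - sq_sqrt (hf i hi)
  have hsum_sq : ∀ i ∈ s, (√(f i) + √(g i)) ^ 2 ≤ 2 * (f i + g i) := fun i hi => by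
    nlinarith [sq_sqrt (hf i hi), sq_sqrt (hg i hi), sq_nonneg (√(f i) - √(g i))]
  calc (∑ i ∈ s, |f i - g i|) ^ 2
      = (∑ i ∈ s, |√(f i) - √(g i)| * (√(f i) + √(g i))) ^ 2 := by rw [sum_congr rfl hfactor]
    _ ≤ (∑ i ∈ s, |√(f i) - √(g i)| ^ 2) * ∑ i ∈ s, (√(f i) + √(g i)) ^ 2 :=
      sum_mul_sq_le_sq_mul_sq s _ _
    _ ≤ (∑ i ∈ s, (√(f i) - √(g i)) ^ 2) * ∑ i ∈ s, 2 * (f i + g i) := by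
      simp only [sq_abs]
      exact mul_le_mul_of_nonneg_left (sum_le_sum hsum_sq) (sum_nonneg fun i _ => sq_nonneg _)
    _ = 2 * (∑ i ∈ s, (f i + g i)) * ∑ i ∈ s, (√(f i) - √(g i)) ^ 2 := by
      rw [← mul_sum]; ring

theorem sum_sqrt_sub_sqrt_sq (hf : ∀ i ∈ s, 0 ≤ f i) (hg : ∀ i ∈ s, 0 ≤ g i) :
    ∑ i ∈ s, (√(f i) - √(g i)) ^ 2 =
      ∑ i ∈ s, f i + ∑ i ∈ s, g i - 2 * ∑ i ∈ s, √(f i) * √(g i) := by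
  rw [mul_sum, ← sum_add_distrib, ← sum_sub_distrib]
  refine sum_congr rfl fun i hi => ?_
  linear_combination sq_sqrt (hf i hi) + sq_sqrt (hg i hi)

theorem one_sub_prod_le_sum_one_sub (h0 : ∀ i ∈ s, 0 ≤ f i) (h1 : ∀ i ∈ s, f i ≤ 1) :
    1 - ∏ i ∈ s, f i ≤ ∑ i ∈ s, (1 - f i) := by
  classical
  induction s using Finset.induction_on with
  | empty => simp
  | insert a s ha ih =>
    rw [prod_insert ha, sum_insert ha]
    have hprod_le : ∏ i ∈ s, f i ≤ 1 :=
      prod_le_one (fun i hi => h0 i (mem_insert_of_mem hi)) fun i hi => h1 i (mem_insert_of_mem hi)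
    have := ih (fun i hi => h0 i (mem_insert_of_mem hi)) fun i hi => h1 i (mem_insert_of_mem hi)
    nlinarith [h0 a (mem_insert_self a s), h1 a (mem_insert_self a s)]

theorem abs_sum_le_half_sum_abs_of_sum_eq_zero {Ω : Type*} [Fintype Ω] [DecidableEq Ω]
    (d : Ω → ℝ) (hd : ∑ x, d x = 0) (E : Finset Ω) :
    |∑ x ∈ E, d x| ≤ (1 / 2) * ∑ x, |d x| := by
  have hcompl : ∑ x ∈ E, d x = -∑ x ∈ Eᶜ, d x := by
    linarith [sum_add_sum_compl E d]
  have hE := abs_sum_le_sum_abs d E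
  have hEc := abs_sum_le_sum_abs d Eᶜ
  rw [hcompl, abs_neg] at hE ⊢
  rw [← sum_add_sum_compl E fun x => |d x|]
  linarith

end FiniteSums

section Products

variable {A : Type*} [Fintype A] [DecidableEq A] {β : A → Type*} [∀ a, Fintype (β a)]
  {f g : ∀ a, β a → ℝ}

theorem sum_prod_eq_one (hf : ∀ a, ∑ b, f a b = 1) : ∑ x : (∀ a, β a), ∏ a, f a (x a) = 1 := by
  rw [← Fintype.prod_sum f]
  exact prod_eq_one fun a _ => hf a

theorem sum_sqrt_prod_mul_sqrt_prod (hf : ∀ a b, 0 ≤ f a b) (hg : ∀ a b, 0 ≤ g a b) :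
    ∑ x : (∀ a, β a), √(∏ a, f a (x a)) * √(∏ a, g a (x a)) = ∏ a, ∑ b, √(f a b) * √(g a b) := by
  simp_rw [sqrt_prod _ fun a _ => hf a _, sqrt_prod _ fun a _ => hg a _, ← prod_mul_distrib]
  exact (Fintype.prod_sum fun a b => √(f a b) * √(g a b)).symm

theorem sq_sum_abs_prod_sub_prod_le (hf0 : ∀ a b, 0 ≤ f a b) (hg0 : ∀ a b, 0 ≤ g a b)
    (hf1 : ∀ a, ∑ b, f a b = 1) (hg1 : ∀ a, ∑ b, g a b = 1) :
    (∑ x : (∀ a, β a), |∏ a, f a (x a) - ∏ a, g a (x a)|) ^ 2 ≤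
      4 * ∑ a, ∑ b, (√(f a b) - √(g a b)) ^ 2 := by
  set ρ : A → ℝ := fun a => ∑ b, √(f a b) * √(g a b)
  have hhellinger : ∀ a, ∑ b, (√(f a b) - √(g a b)) ^ 2 = 2 * (1 - ρ a) := fun a => by
    rw [sum_sqrt_sub_sqrt_sq _ (fun b _ => hf0 a b) fun b _ => hg0 a b, hf1, hg1]; ring
  have hρ0 : ∀ a ∈ univ, 0 ≤ ρ a := fun a _ => sum_nonneg fun b _ => by positivity
  have hρ1 : ∀ a ∈ univ, ρ a ≤ 1 := fun a _ => by
    have := sum_nonneg fun b (_ : b ∈ univ) => sq_nonneg (√(f a b) - √(g a b))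
    rw [hhellinger] at this
    linarith
  have hF0 : ∀ x ∈ (univ : Finset (∀ a, β a)), 0 ≤ ∏ a, f a (x a) :=
    fun x _ => prod_nonneg fun a _ => hf0 a _
  have hG0 : ∀ x ∈ (univ : Finset (∀ a, β a)), 0 ≤ ∏ a, g a (x a) :=
    fun x _ => prod_nonneg fun a _ => hg0 a _
  calc _ ≤ 2 * (∑ x : (∀ a, β a), (∏ a, f a (x a) + ∏ a, g a (x a))) *
          ∑ x : (∀ a, β a), (√(∏ a, f a (x a)) - √(∏ a, g a (x a))) ^ 2 :=
        sq_sum_abs_sub_le_mul_sum_sqrt_sub_sqrt_sq _ hF0 hG0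
    _ = 8 * (1 - ∏ a, ρ a) := by
      rw [sum_sqrt_sub_sqrt_sq _ hF0 hG0, sum_add_distrib, sum_prod_eq_one hf1,
        sum_prod_eq_one hg1, sum_sqrt_prod_mul_sqrt_prod hf0 hg0]
      ring
    _ ≤ 8 * ∑ a, (1 - ρ a) := by gcongr; exact one_sub_prod_le_sum_one_sub _ hρ0 hρ1
    _ = 4 * ∑ a, ∑ b, (√(f a b) - √(g a b)) ^ 2 := by
      simp_rw [hhellinger, ← mul_sum]; ring

end Products

def bernoulliMass (p : ℝ) (b : Bool) : ℝ := if b then p else 1 - p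

theorem sum_bernoulliMass (p : ℝ) : ∑ b, bernoulliMass p b = 1 := by
  simp [bernoulliMass]

theorem bernoulliMass_nonneg {p : ℝ} (hp0 : 0 ≤ p) (hp1 : p ≤ 1) (b : Bool) :
    0 ≤ bernoulliMass p b := by
  cases b <;> simp [bernoulliMass] <;> linarith

theorem sum_sqrt_bernoulliMass_sub_sq_le {ε p q : ℝ} (hε : 0 < ε) (hp0 : 0 ≤ p) (hp1 : p ≤ 1)
    (hq0 : 0 < q) (hq1 : q ≤ 1 - ε) :
    ∑ b, (√(bernoulliMass p b) - √(bernoulliMass q b)) ^ 2 ≤ ε⁻¹ * ((p - q) ^ 2 / q) := by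
  have h1q : 0 < 1 - q := by linarith
  calc ∑ b, (√(bernoulliMass p b) - √(bernoulliMass q b)) ^ 2
      = (√p - √q) ^ 2 + (√(1 - p) - √(1 - q)) ^ 2 := by simp [bernoulliMass]
    _ ≤ (p - q) ^ 2 / q + ((1 - p) - (1 - q)) ^ 2 / (1 - q) :=
      add_le_add (sqrt_sub_sqrt_sq_le hp0 hq0) (sqrt_sub_sqrt_sq_le (by linarith) h1q)
    _ = (p - q) ^ 2 / (q * (1 - q)) := by field_simp; ring
    _ ≤ (p - q) ^ 2 / (q * ε) := by gcongr; linarith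
    _ = ε⁻¹ * ((p - q) ^ 2 / q) := by field_simp

theorem sq_sum_abs_prod_bernoulliMass_sub_le {A : Type*} [Fintype A] [DecidableEq A]
    {ε : ℝ} (hε : 0 < ε) {p q : A → ℝ} (hp : ∀ a, 0 ≤ p a ∧ p a ≤ 1)
    (hq : ∀ a, 0 < q a ∧ q a ≤ 1 - ε) :
    (∑ x : A → Bool, |∏ a, bernoulliMass (p a) (x a) - ∏ a, bernoulliMass (q a) (x a)|) ^ 2 ≤
      4 * (ε⁻¹ * ∑ a, (p a - q a) ^ 2 / q a) := by
  refine (sq_sum_abs_prod_sub_prod_le (fun a => bernoulliMass_nonneg (hp a).1 (hp a).2)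
    (fun a => bernoulliMass_nonneg (hq a).1.le (by linarith [(hq a).2]))
    (fun a => sum_bernoulliMass (p a)) fun a => sum_bernoulliMass (q a)).trans
    (mul_le_mul_of_nonneg_left ?_ (by norm_num))
  rw [mul_sum]
  exact sum_le_sum fun a _ =>
    sum_sqrt_bernoulliMass_sub_sq_le hε (hp a).1 (hp a).2 (hq a).1 (hq a).2

/-- Janson-type criterion: the total variation distance between two product Bernoulli
laws with success probabilities `p` and `q` (with `q` bounded away from `1`) is bounded
by `C(ε̂) · (Σ (pₐ-qₐ)²/qₐ)^{1/2}`; in particular the probability of any event differs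
by at most this bound. -/
theorem bernoulli_product_tv (εh : ℝ) (hε : 0 < εh) :
    ∃ C : ℝ, 0 < C ∧ ∀ (A : Type) [Fintype A] [DecidableEq A] (p q : A → ℝ),
      (∀ a, 0 ≤ p a ∧ p a ≤ 1) → (∀ a, 0 < q a ∧ q a ≤ 1 - εh) →
      ((1 / 2) * ∑ x : A → Bool,
          |(∏ a, if x a then p a else 1 - p a) - (∏ a, if x a then q a else 1 - q a)|
        ≤ C * Real.sqrt (∑ a, (p a - q a) ^ 2 / q a)) ∧
      ∀ E : Finset (A → Bool),
        |∑ x ∈ E, ((∏ a, if x a then p a else 1 - p a) -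
            (∏ a, if x a then q a else 1 - q a))|
          ≤ C * Real.sqrt (∑ a, (p a - q a) ^ 2 / q a) := by
  refine ⟨√εh⁻¹, by positivity, fun A _ _ p q hp hq => ?_⟩
  have htv : (1 / 2) * ∑ x : A → Bool,
      |∏ a, bernoulliMass (p a) (x a) - ∏ a, bernoulliMass (q a) (x a)| ≤
        √εh⁻¹ * √(∑ a, (p a - q a) ^ 2 / q a) := by
    rw [← sqrt_mul (by positivity)]
    refine (le_abs_self _).trans (abs_le_sqrt ?_)
    linarith [sq_sum_abs_prod_bernoulliMass_sub_le hε hp hq]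
  refine ⟨htv, fun E => (abs_sum_le_half_sum_abs_of_sum_eq_zero _ ?_ E).trans htv⟩
  show ∑ x : A → Bool, (∏ a, bernoulliMass (p a) (x a) - ∏ a, bernoulliMass (q a) (x a)) = 0
  rw [sum_sub_distrib, sum_prod_eq_one fun a => sum_bernoulliMass (p a),
    sum_prod_eq_one fun a => sum_bernoulliMass (q a), sub_self]
end
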